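/- arXiv:1904.06428 — 3 statements merged into one kernel-verified Lean document; each statement's English description precedes it below -/
import Mathlib

section
/- Let p ∈ ℕ\{0} and t = (t_x,t_y) ∈ ℤ²\{0} with 0 < |t_x|,|t_y| and let ω = ⟦0,p−1⟧². Define Ω₀ = (ω − t) ∩ ωᶜ and, for x₀ ∈ Ω₀, J(x₀) = min{k ∈ ℕ\{0} : x₀ + k t ∉ ω}. Then the set {(x₀,ℓ) : x₀ ∈ Ω₀, ℓ ∈ ⟦1, J(x₀)−1⟧} is in bijection with ω via (x₀,ℓ) ↦ x₀ + ℓt. -/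
open Set

/-- Orbit decomposition of the square patch domain ω = ⟦0,p-1⟧² under the
translation by t: the map (x₀, ℓ) ↦ x₀ + ℓ·t is a bijection from
{(x₀,ℓ) : x₀ ∈ Ω₀, 1 ≤ ℓ ≤ J(x₀) - 1} onto ω, where Ω₀ = (ω - t) ∩ ωᶜ and
J(x₀) is the exit time of the orbit. -/
theorem stmt_13 (p : ℕ) (hp : 0 < p) (t : ℤ × ℤ) (ht₁ : t.1 ≠ 0) (ht₂ : t.2 ≠ 0)
    (ω : Set (ℤ × ℤ))
    (hω : ω = {x : ℤ × ℤ | 0 ≤ x.1 ∧ x.1 ≤ (p : ℤ) - 1 ∧ 0 ≤ x.2 ∧ x.2 ≤ (p : ℤ) - 1})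
    (Ω₀ : Set (ℤ × ℤ)) (hΩ₀ : Ω₀ = {x : ℤ × ℤ | x + t ∈ ω ∧ x ∉ ω})
    (J : ℤ × ℤ → ℕ)
    (hJ : ∀ x₀, J x₀ = sInf {k : ℕ | 0 < k ∧ x₀ + k • t ∉ ω}) :
    Set.BijOn (fun q : (ℤ × ℤ) × ℕ => q.1 + q.2 • t)
      {q : (ℤ × ℤ) × ℕ | q.1 ∈ Ω₀ ∧ 1 ≤ q.2 ∧ q.2 ≤ J q.1 - 1} ω := by
  -- escape lemma: the orbit of any point in any horizontal-nonzero direction leaves ω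
  have key : ∀ s : ℤ × ℤ, s.1 ≠ 0 → ∀ z : ℤ × ℤ, ∃ k : ℕ, 0 < k ∧ z + k • s ∉ ω := by
    intro s hs z
    refine ⟨p + z.1.natAbs + 1, by omega, ?_⟩
    rw [hω]
    intro hmem
    obtain ⟨h1, h2, -⟩ := hmem
    have hfst : (z + (p + z.1.natAbs + 1 : ℕ) • s).1
        = z.1 + ((p : ℤ) + z.1.natAbs + 1) * s.1 := by
      show z.1 + (p + z.1.natAbs + 1 : ℕ) • s.1 = _
      push_cast [nsmul_eq_mul]
      ring
    rw [hfst] at h1 h2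
    have hz1 : z.1 ≤ (z.1.natAbs : ℤ) := by omega
    have hz2 : -(z.1.natAbs : ℤ) ≤ z.1 := by omega
    have hK : (0:ℤ) ≤ (p : ℤ) + z.1.natAbs + 1 := by positivity
    rcases hs.lt_or_gt with h | h
    · -- s.1 < 0
      nlinarith [mul_nonneg hK (show (0:ℤ) ≤ -s.1 - 1 by omega)]
    · -- 0 < s.1
      nlinarith [mul_nonneg hK (show (0:ℤ) ≤ s.1 - 1 by omega)]
  -- before the exit time, the orbit stays in ω
  have memA : ∀ x₀ : ℤ × ℤ, ∀ ℓ : ℕ, 0 < ℓ → ℓ < J x₀ → x₀ + ℓ • t ∈ ω := by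
    intro x₀ ℓ hpos hlt
    rw [hJ] at hlt
    have h := Nat.notMem_of_lt_sInf hlt
    simp only [mem_setOf_eq, not_and, not_not] at h
    exact h hpos
  -- lower bound on the exit time
  have lbJ : ∀ x₀ : ℤ × ℤ, ∀ n : ℕ, (∀ k : ℕ, 0 < k → k ≤ n → x₀ + k • t ∈ ω) →
      n < J x₀ := by
    intro x₀ n h
    by_contra hc
    push_neg at hc
    have hne : {k : ℕ | 0 < k ∧ x₀ + k • t ∉ ω}.Nonempty := key t ht₁ x₀
    have hm := Nat.sInf_mem hne
    rw [← hJ] at hm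
    exact hm.2 (h _ hm.1 (le_trans hc (by omega)))
  refine ⟨?_, ?_, ?_⟩
  · -- MapsTo
    rintro ⟨x₀, ℓ⟩ ⟨hx₀, h1, h2⟩
    have h2' : ℓ ≤ J x₀ - 1 := h2
    exact memA x₀ ℓ (by omega) (by omega)
  · -- InjOn
    rintro ⟨x, ℓ⟩ ⟨hx, hx1, hx2⟩ ⟨y, m⟩ ⟨hy, hy1, hy2⟩ heq
    simp only at heq
    have hx2' : ℓ ≤ J x - 1 := hx2
    have hy2' : m ≤ J y - 1 := hy2
    have hxnot : x ∉ ω := by rw [hΩ₀] at hx; exact hx.2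
    have hynot : y ∉ ω := by rw [hΩ₀] at hy; exact hy.2
    have hlm : ℓ = m := by
      rcases lt_trichotomy ℓ m with h | h | h
      · exfalso
        have hsplit : m • t = (m - ℓ) • t + ℓ • t := by
          rw [← add_nsmul]; congr 1; omega
        have hxy : x = y + (m - ℓ) • t := by
          have : x + ℓ • t = (y + (m - ℓ) • t) + ℓ • t := by
            rw [heq, hsplit]; abel
          exact add_right_cancel this
        have : y + (m - ℓ) • t ∈ ω := memA y (m - ℓ) (by omega) (by omega)
        rw [← hxy] at this
        exact hxnot this
      · exact h
      · exfalso
        have hsplit : ℓ • t = (ℓ - m) • t + m • t := by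
          rw [← add_nsmul]; congr 1; omega
        have hxy : y = x + (ℓ - m) • t := by
          have : y + m • t = (x + (ℓ - m) • t) + m • t := by
            rw [← heq, hsplit]; abel
          exact add_right_cancel this
        have : x + (ℓ - m) • t ∈ ω := memA x (ℓ - m) (by omega) (by omega)
        rw [← hxy] at this
        exact hynot this
    subst hlm
    have hxy : x = y := by
      have : x + ℓ • t = y + ℓ • t := heq
      exact add_right_cancel this
    simp [hxy]
  · -- SurjOn
    intro y hy
    have hTne : {j : ℕ | 0 < j ∧ y + j • (-t) ∉ ω}.Nonempty :=
      key (-t) (by simpa using ht₁) y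
    set n := sInf {j : ℕ | 0 < j ∧ y + j • (-t) ∉ ω} with hn_def
    have hn := Nat.sInf_mem hTne
    rw [← hn_def] at hn
    set x₀ : ℤ × ℤ := y + n • (-t) with hx₀_def
    have claim : ∀ k : ℕ, 0 < k → k ≤ n → x₀ + k • t ∈ ω := by
      intro k hk hkn
      have hsplit : n • (-t) = (n - k) • (-t) + k • (-t) := by
        rw [← add_nsmul]; congr 1; omega
      have hx : x₀ + k • t = y + (n - k) • (-t) := by
        rw [hx₀_def, hsplit]
        simp [smul_neg]
        abel
      rw [hx]
      rcases eq_or_lt_of_le hkn with h | h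
      · have : n - k = 0 := by omega
        simpa [this] using hy
      · have hnot : n - k ∉ {j : ℕ | 0 < j ∧ y + j • (-t) ∉ ω} :=
          Nat.notMem_of_lt_sInf (by omega)
        simp only [mem_setOf_eq, not_and, not_not] at hnot
        exact hnot (by omega)
    have hx₀Ω : x₀ ∈ Ω₀ := by
      rw [hΩ₀]
      refine ⟨?_, hn.2⟩
      have := claim 1 one_pos hn.1
      simpa using this
    have hnJ : n < J x₀ := lbJ x₀ n claim
    refine ⟨(x₀, n), ⟨hx₀Ω, hn.1, show n ≤ J x₀ - 1 by omega⟩, ?_⟩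
    simp only [hx₀_def, smul_neg]
    exact neg_add_cancel_right y (n • t)
end

section
/- Let p ∈ ℕ\{0}, t = (t_x,t_y) with t_x,t_y > 0 and t_x,t_y < p, and q = ⌈p/max(t_x,t_y)⌉. With Ω₀ and J as above (orbits of translation by t in ω = ⟦0,p−1⟧²), for every m with 2 ≤ m < q, the number of entry points x₀ ∈ Ω₀ with J(x₀) = m equals 2 t_x t_y. -/
/-!
Along the orbit `x₀ + k t` of an entry point the exit condition `p ≤ a + k t_x ∨ p ≤ b + k t_y`
is monotone in `k`, so `J(x₀) = m` says exactly that `x₀ + (m-1) t ∈ ω` and `x₀ + m t ∉ ω`.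
An entry point `(a, b)` has a negative coordinate, say `a < 0`; since `m · max(t_x, t_y) < p`
when `m < q`, the orbit cannot leave `ω` through the side `x = p` by time `m`, so it must leave
through `y = p` exactly at time `m`. This pins `b` to an interval of length `t_y`, while `a`
ranges over `⟦-t_x, -1⟧`; in particular no point with both coordinates negative contributes.
-/

open Set

-- `discreteSquare p`, `entrySet p t` and `exitTime p t` are the paper's `ω`, `Ω₀` and `J`.
def discreteSquare (p : ℤ) : Set (ℤ × ℤ) :=
  {x | 0 ≤ x.1 ∧ x.1 ≤ p - 1 ∧ 0 ≤ x.2 ∧ x.2 ≤ p - 1}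

def entrySet (p : ℤ) (t : ℤ × ℤ) : Set (ℤ × ℤ) :=
  {x | x + t ∈ discreteSquare p ∧ x ∉ discreteSquare p}

noncomputable def exitTime (p : ℤ) (t : ℤ × ℤ) (x : ℤ × ℤ) : ℕ :=
  sInf {k : ℕ | 0 < k ∧ x + k • t ∉ discreteSquare p}

theorem Nat.sInf_pos_eq_iff_of_monotone {P : ℕ → Prop} (hP : Monotone P) {m : ℕ} (hm : 2 ≤ m) :
    sInf {k | 0 < k ∧ P k} = m ↔ P m ∧ ¬ P (m - 1) := by
  obtain ⟨n, rfl⟩ : ∃ n, m = n + 1 := ⟨m - 1, by omega⟩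
  rw [Nat.sInf_upward_closed_eq_succ_iff (s := {k | 0 < k ∧ P k})
    fun k₁ k₂ hk h => ⟨h.1.trans_le hk, hP hk h.2⟩]
  simp only [mem_ofPred_eq, Nat.add_sub_cancel]
  constructor
  · rintro ⟨⟨-, h⟩, h'⟩
    exact ⟨h, fun hn => h' ⟨by omega, hn⟩⟩
  · rintro ⟨h, h'⟩
    exact ⟨⟨n.succ_pos, h⟩, fun hn => h' hn.2⟩

section Square

variable {p tx ty a b : ℤ}

theorem mem_entrySet_iff (htx : 0 ≤ tx) (hty : 0 ≤ ty) :
    (a, b) ∈ entrySet p (tx, ty) ↔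
      -tx ≤ a ∧ a ≤ p - 1 - tx ∧ -ty ≤ b ∧ b ≤ p - 1 - ty ∧ (a < 0 ∨ b < 0) := by
  simp only [entrySet, discreteSquare, mem_ofPred_eq, Prod.mk_add_mk]
  omega

theorem add_nsmul_notMem_discreteSquare_iff (htx : 0 ≤ tx) (hty : 0 ≤ ty) (ha : -tx ≤ a)
    (hb : -ty ≤ b) {k : ℕ} (hk : 0 < k) :
    (a, b) + k • (tx, ty) ∉ discreteSquare p ↔ p ≤ a + k * tx ∨ p ≤ b + k * ty := by
  have hk : (1 : ℤ) ≤ k := by exact_mod_cast hk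
  have : tx ≤ k * tx := le_mul_of_one_le_left htx hk
  have : ty ≤ k * ty := le_mul_of_one_le_left hty hk
  simp only [discreteSquare, mem_ofPred_eq, Prod.smul_mk, Prod.mk_add_mk, nsmul_eq_mul]
  omega

theorem exitTime_eq_iff (htx : 0 ≤ tx) (hty : 0 ≤ ty) (ha : -tx ≤ a) (hb : -ty ≤ b) {m : ℕ}
    (hm : 2 ≤ m) :
    exitTime p (tx, ty) (a, b) = m ↔
      (p ≤ a + m * tx ∨ p ≤ b + m * ty) ∧ a + m * tx < p + tx ∧ b + m * ty < p + ty := by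
  have hexit : {k : ℕ | 0 < k ∧ (a, b) + k • (tx, ty) ∉ discreteSquare p} =
      {k : ℕ | 0 < k ∧ (p ≤ a + k * tx ∨ p ≤ b + k * ty)} := by
    ext k
    simp only [mem_ofPred_eq]
    exact and_congr_right (add_nsmul_notMem_discreteSquare_iff htx hty ha hb)
  have hmono : Monotone fun k : ℕ => p ≤ a + k * tx ∨ p ≤ b + k * ty := by
    intro k₁ k₂ hk
    have hk : (k₁ : ℤ) ≤ k₂ := by exact_mod_cast hk
    have := mul_le_mul_of_nonneg_right hk htx
    have := mul_le_mul_of_nonneg_right hk hty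
    simp only [le_Prop_eq]
    omega
  rw [exitTime, hexit, Nat.sInf_pos_eq_iff_of_monotone hmono hm]
  push_cast [show 1 ≤ m by omega]
  simp only [not_or, not_le, sub_one_mul]
  omega

theorem entrySet_exitTime_eq {m : ℕ} (htx : 0 ≤ tx) (hty : 0 ≤ ty) (hm : 2 ≤ m)
    (hmx : m * tx < p) (hmy : m * ty < p) :
    {x | x ∈ entrySet p (tx, ty) ∧ exitTime p (tx, ty) x = m} =
      ↑(Finset.Ico (-tx) 0 ×ˢ Finset.Ico (p - m * ty) (p - m * ty + ty) ∪
        Finset.Ico (p - m * tx) (p - m * tx + tx) ×ˢ Finset.Ico (-ty) 0) := by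
  have hm' : (2 : ℤ) ≤ m := by exact_mod_cast hm
  have : 2 * tx ≤ m * tx := mul_le_mul_of_nonneg_right hm' htx
  have : 2 * ty ≤ m * ty := mul_le_mul_of_nonneg_right hm' hty
  ext ⟨a, b⟩
  simp only [mem_ofPred_eq, Finset.coe_union, Finset.coe_product, Finset.coe_Ico, mem_union,
    mem_prod, mem_Ico, mem_entrySet_iff htx hty]
  by_cases hab : -tx ≤ a ∧ -ty ≤ b
  · rw [exitTime_eq_iff htx hty hab.1 hab.2 hm]
    omega
  · omega

end Square

theorem card_entrySet_exitTime_eq {p : ℤ} {tx ty m : ℕ} (hm : 2 ≤ m) (hmx : m * tx < p)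
    (hmy : m * ty < p) :
    Nat.card {x | x ∈ entrySet p (tx, ty) ∧ exitTime p (tx, ty) x = m} = 2 * tx * ty := by
  rw [entrySet_exitTime_eq (by positivity) (by positivity) hm hmx hmy, Nat.card_coe_set_eq,
    ncard_coe_finset, Finset.card_union_of_disjoint, Finset.card_product, Finset.card_product]
  · simp only [Int.card_Ico, sub_neg_eq_add, zero_add, Int.toNat_natCast, add_sub_cancel_left]
    ring
  · rw [Finset.disjoint_left]
    rintro ⟨a, b⟩ h₁ h₂
    simp only [Finset.mem_product, Finset.mem_Ico] at h₁ h₂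
    omega

theorem stmt_14_general (p tx ty : ℕ)
    (t : ℤ × ℤ) (ht : t = ((tx : ℤ), (ty : ℤ)))
    (ω : Set (ℤ × ℤ))
    (hω : ω = {x : ℤ × ℤ | 0 ≤ x.1 ∧ x.1 ≤ (p : ℤ) - 1 ∧ 0 ≤ x.2 ∧ x.2 ≤ (p : ℤ) - 1})
    (Ω₀ : Set (ℤ × ℤ)) (hΩ₀ : Ω₀ = {x : ℤ × ℤ | x + t ∈ ω ∧ x ∉ ω})
    (J : ℤ × ℤ → ℕ)
    (hJ : ∀ x₀, J x₀ = sInf {k : ℕ | 0 < k ∧ x₀ + k • t ∉ ω})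
    (q : ℕ) (hq : q = (p + max tx ty - 1) / max tx ty)
    (m : ℕ) (hm₁ : 2 ≤ m) (hm₂ : m < q) :
    Nat.card {x₀ : ℤ × ℤ | x₀ ∈ Ω₀ ∧ J x₀ = m} = 2 * tx * ty := by
  have hT : 0 < max tx ty := Nat.pos_of_ne_zero fun h => by simp [hq, h] at hm₂
  have hmax : m * max tx ty < p := by
    rwa [hq, ← Nat.ceilDiv_eq_add_pred_div, ← not_le, ceilDiv_le_iff_le_mul hT, not_le,
      mul_comm] at hm₂
  have hmx : m * tx < p := (Nat.mul_le_mul_left m (le_max_left tx ty)).trans_lt hmax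
  have hmy : m * ty < p := (Nat.mul_le_mul_left m (le_max_right tx ty)).trans_lt hmax
  obtain rfl : J = exitTime p t := funext fun x => by rw [hJ, hω]; rfl
  subst ht hω hΩ₀
  exact card_entrySet_exitTime_eq hm₁ (by exact_mod_cast hmx) (by exact_mod_cast hmy)

/-- Multiplicity count (Proposition 4.4 (b)): for 2 ≤ m < q = ⌈p / max(t_x,t_y)⌉,
the number of entry points x₀ ∈ Ω₀ with exit time J(x₀) = m equals 2·t_x·t_y. -/
theorem stmt_14 (p tx ty : ℕ) (hp : 0 < p) (htx : 0 < tx) (hty : 0 < ty)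
    (htxp : tx < p) (htyp : ty < p)
    (t : ℤ × ℤ) (ht : t = ((tx : ℤ), (ty : ℤ)))
    (ω : Set (ℤ × ℤ))
    (hω : ω = {x : ℤ × ℤ | 0 ≤ x.1 ∧ x.1 ≤ (p : ℤ) - 1 ∧ 0 ≤ x.2 ∧ x.2 ≤ (p : ℤ) - 1})
    (Ω₀ : Set (ℤ × ℤ)) (hΩ₀ : Ω₀ = {x : ℤ × ℤ | x + t ∈ ω ∧ x ∉ ω})
    (J : ℤ × ℤ → ℕ)
    (hJ : ∀ x₀, J x₀ = sInf {k : ℕ | 0 < k ∧ x₀ + k • t ∉ ω})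
    (q : ℕ) (hq : q = (p + max tx ty - 1) / max tx ty)
    (m : ℕ) (hm₁ : 2 ≤ m) (hm₂ : m < q) :
    Nat.card {x₀ : ℤ × ℤ | x₀ ∈ Ω₀ ∧ J x₀ = m} = 2 * tx * ty :=
  stmt_14_general p tx ty t ht ω hω Ω₀ hΩ₀ J hJ q hq m hm₁ hm₂
end

section
/- Consider the alternate minimization scheme: given q(B,M) = Σ_{e∈E}‖m_e b₁ + n_e b₂ − e‖² + δ_B‖B‖² + δ_M‖M‖² with δ_B, δ_M > 0, iterate: M_{n+1} ∈ ℤ^{2|E|} is accepted only if q(B_n, M_{n+1}) < q(B_n, M_n) (otherwise M_{n+1} = M_n), and B_{n+1} = argmin_B q(B, M_{n+1}). Then the sequence q(B_n, M_n) is non-increasing, the sequences (B_n) and (M_n) are bounded, and (M_n) and (B_n) are eventually constant, i.e., the algorithm converges in finitely many iterations. -/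
open Finset

/-!
Along the iteration the objective never increases: a proposed `M` is accepted only if it lowers
`q`, and the `B`-step minimizes `q`. Since every term of `q` is non-negative, `q(B₀, M₀)`
bounds `δ_B ‖B_n‖²` and `δ_M ‖M_n‖²`, so the integer coefficients `M_n` stay in a finite set.
From the first step on, `q(B_n, M_n)` is the minimum of `q(·, M_n)`, hence takes only finitely
many values; being non-increasing, it is eventually constant, and then the strict acceptance
rule freezes `M_n`. Finally `q(·, M)` is strictly convex in `B` (the term `δ_B ‖B‖²` is strongly
convex), so its minimizer is unique and `B_n` freezes as well.
-/

theorem Antitone.exists_forall_ge_eq_of_finite_range {α : Type*} [LinearOrder α] {f : ℕ → α}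
    (hf : Antitone f) (hfin : (Set.range f).Finite) : ∃ N, ∀ n, N ≤ n → f n = f N := by
  obtain ⟨_, ⟨N, rfl⟩, hmin⟩ := Set.exists_min_image _ id hfin (Set.range_nonempty f)
  exact ⟨N, fun n hn => le_antisymm (hf hn) (hmin _ ⟨n, rfl⟩)⟩

structure IsAlternateMinimization {α β γ : Type*} [Preorder γ] (Q : α → β → γ) (B : ℕ → α)
    (M : ℕ → β) : Prop where
  accept : ∀ n, Q (B n) (M (n + 1)) < Q (B n) (M n) ∨ M (n + 1) = M n
  isMin : ∀ n B', Q (B (n + 1)) (M (n + 1)) ≤ Q B' (M (n + 1))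

namespace IsAlternateMinimization

variable {α β γ : Type*} {Q : α → β → γ} {B : ℕ → α} {M : ℕ → β}

section Preorder

variable [Preorder γ]

theorem objective_succ_le (h : IsAlternateMinimization Q B M) (n : ℕ) :
    Q (B (n + 1)) (M (n + 1)) ≤ Q (B n) (M n) := by
  rcases h.accept n with hlt | heq
  · exact (h.isMin n (B n)).trans hlt.le
  · calc Q (B (n + 1)) (M (n + 1)) ≤ Q (B n) (M (n + 1)) := h.isMin n (B n)
      _ = Q (B n) (M n) := by rw [heq]

theorem objective_antitone (h : IsAlternateMinimization Q B M) :
    Antitone fun n => Q (B n) (M n) :=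
  antitone_nat_of_succ_le h.objective_succ_le

theorem succ_eq_of_objective_eq (h : IsAlternateMinimization Q B M) {n : ℕ}
    (hn : Q (B (n + 1)) (M (n + 1)) = Q (B n) (M n)) : M (n + 1) = M n :=
  (h.accept n).resolve_left fun hlt => (hn ▸ h.isMin n (B n)).not_gt hlt

theorem isMin_of_pos (h : IsAlternateMinimization Q B M) {n : ℕ} (hn : 0 < n) :
    ∀ B', Q (B n) (M n) ≤ Q B' (M n) := by
  obtain ⟨k, rfl⟩ := Nat.exists_eq_add_one_of_ne_zero hn.ne'
  exact h.isMin k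

end Preorder

section ConditionallyCompleteLinearOrder

variable [ConditionallyCompleteLinearOrder γ]

theorem objective_eq_iInf (h : IsAlternateMinimization Q B M) {n : ℕ} (hn : 0 < n) :
    Q (B n) (M n) = ⨅ B', Q B' (M n) :=
  have : Nonempty α := ⟨B n⟩
  le_antisymm (le_ciInf (h.isMin_of_pos hn))
    (ciInf_le ⟨_, Set.forall_mem_range.2 (h.isMin_of_pos hn)⟩ _)

theorem exists_objective_eq (h : IsAlternateMinimization Q B M) (hfin : (Set.range M).Finite) :
    ∃ N, 0 < N ∧ ∀ n, N ≤ n → Q (B n) (M n) = Q (B N) (M N) := by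
  have hrange : (Set.range fun n => Q (B (n + 1)) (M (n + 1))).Finite := by
    refine (hfin.image fun v => ⨅ B', Q B' v).subset ?_
    rintro _ ⟨n, rfl⟩
    exact ⟨M (n + 1), ⟨n + 1, rfl⟩, (h.objective_eq_iInf n.succ_pos).symm⟩
  obtain ⟨N, hN⟩ := (h.objective_antitone.comp_monotone fun _ _ => Nat.succ_le_succ)
    |>.exists_forall_ge_eq_of_finite_range hrange
  refine ⟨N + 1, N.succ_pos, fun n hn => ?_⟩
  obtain ⟨k, rfl⟩ := Nat.exists_eq_add_one_of_ne_zero (by omega : n ≠ 0)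
  exact hN k (by omega)

theorem exists_forall_ge_eq (h : IsAlternateMinimization Q B M) (hfin : (Set.range M).Finite)
    (huniq : ∀ v, {P | ∀ B', Q P v ≤ Q B' v}.Subsingleton) :
    ∃ N, ∀ n, N ≤ n → M n = M N ∧ B n = B N := by
  obtain ⟨N, hN0, hN⟩ := h.exists_objective_eq hfin
  have hM : ∀ n, N ≤ n → M n = M N := by
    intro n hn
    induction n, hn using Nat.le_induction with
    | base => rfl
    | succ n hn ih =>
      rw [h.succ_eq_of_objective_eq ((hN (n + 1) (by omega)).trans (hN n hn).symm), ih]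
  refine ⟨N, fun n hn => ⟨hM n hn, huniq (M N) ?_ (h.isMin_of_pos hN0)⟩⟩
  have hmin := h.isMin_of_pos (n := n) (by omega)
  rwa [hM n hn] at hmin

end ConditionallyCompleteLinearOrder

end IsAlternateMinimization

theorem finite_setOf_forall_abs_intCast_le {ι : Type*} [Finite ι] (C : ℝ) :
    {v : ι → ℤ × ℤ | ∀ i, |((v i).1 : ℝ)| ≤ C ∧ |((v i).2 : ℝ)| ≤ C}.Finite := by
  classical
  have : Fintype ι := Fintype.ofFinite ι
  have hceil : ∀ x : ℤ, |(x : ℝ)| ≤ C → -⌈C⌉ ≤ x ∧ x ≤ ⌈C⌉ := fun x hx =>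
    abs_le.1 (Int.cast_le.1 ((Int.cast_abs (R := ℝ) ▸ hx).trans (Int.le_ceil C)))
  refine (Set.finite_Icc (fun _ => (-⌈C⌉, -⌈C⌉)) (fun _ => (⌈C⌉, ⌈C⌉))).subset fun v hv =>
    ⟨fun i => ?_, fun i => ?_⟩
  · exact ⟨(hceil _ (hv i).1).1, (hceil _ (hv i).2).1⟩
  · exact ⟨(hceil _ (hv i).1).2, (hceil _ (hv i).2).2⟩

theorem abs_le_sqrt_div_of_mul_sq_add_le {δ x y c : ℝ} (hδ : 0 < δ) (hy : 0 ≤ y)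
    (h : δ * (x ^ 2 + y) ≤ c) : |x| ≤ √(c / δ) :=
  Real.abs_le_sqrt <| (le_div_iff₀ hδ).2 (by nlinarith)

theorem convexOn_norm_sub_sq_comp_linearMap {F E : Type*} [AddCommGroup F] [Module ℝ F]
    [SeminormedAddCommGroup E] [NormedSpace ℝ E] (L : F →ₗ[ℝ] E) (c : E) :
    ConvexOn ℝ Set.univ fun x => ‖L x - c‖ ^ 2 := by
  have h := (((convexOn_univ_norm (E := E)).pow (fun _ _ => norm_nonneg _) 2).translate_right
    (-c)).comp_linearMap L
  simp only [Set.preimage_univ] at h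
  refine h.congr fun x _ => ?_
  simp only [Function.comp_apply, Pi.pow_apply, sub_eq_neg_add]

section LatticeObjective

variable {ι E : Type*} [Fintype ι]

def latticeObjective [SeminormedAddCommGroup E] [NormedSpace ℝ E] (e : ι → E) (δB δM : ℝ)
    (B : E × E) (M : ι → ℤ × ℤ) : ℝ :=
  (∑ i, ‖((M i).1 : ℝ) • B.1 + ((M i).2 : ℝ) • B.2 - e i‖ ^ 2)
    + δB * (‖B.1‖ ^ 2 + ‖B.2‖ ^ 2)
    + δM * ∑ i, (((M i).1 : ℝ) ^ 2 + ((M i).2 : ℝ) ^ 2)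

variable {e : ι → E} {δB δM : ℝ}

section Normed

variable [SeminormedAddCommGroup E] [NormedSpace ℝ E]

theorem mul_norm_sq_le_latticeObjective (hδM : 0 ≤ δM) (B : E × E) (M : ι → ℤ × ℤ) :
    δB * (‖B.1‖ ^ 2 + ‖B.2‖ ^ 2) ≤ latticeObjective e δB δM B M := by
  have : 0 ≤ δM * ∑ i, (((M i).1 : ℝ) ^ 2 + ((M i).2 : ℝ) ^ 2) := by positivity
  have : 0 ≤ ∑ i, ‖((M i).1 : ℝ) • B.1 + ((M i).2 : ℝ) • B.2 - e i‖ ^ 2 := by positivity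
  unfold latticeObjective
  linarith

theorem mul_coeff_sq_le_latticeObjective (hδB : 0 ≤ δB) (hδM : 0 ≤ δM) (B : E × E)
    (M : ι → ℤ × ℤ) (i : ι) :
    δM * (((M i).1 : ℝ) ^ 2 + ((M i).2 : ℝ) ^ 2) ≤ latticeObjective e δB δM B M := by
  have : 0 ≤ δB * (‖B.1‖ ^ 2 + ‖B.2‖ ^ 2) := by positivity
  have : 0 ≤ ∑ i, ‖((M i).1 : ℝ) • B.1 + ((M i).2 : ℝ) • B.2 - e i‖ ^ 2 := by positivity
  have : δM * (((M i).1 : ℝ) ^ 2 + ((M i).2 : ℝ) ^ 2)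
      ≤ δM * ∑ j, (((M j).1 : ℝ) ^ 2 + ((M j).2 : ℝ) ^ 2) :=
    mul_le_mul_of_nonneg_left
      (single_le_sum (f := fun j => ((M j).1 : ℝ) ^ 2 + ((M j).2 : ℝ) ^ 2)
        (fun j _ => by positivity) (mem_univ i)) hδM
  unfold latticeObjective
  linarith

theorem bounded_of_latticeObjective_le (hδB : 0 < δB) (hδM : 0 < δM) {B : E × E}
    {M : ι → ℤ × ℤ} {c : ℝ} (hc : latticeObjective e δB δM B M ≤ c) :
    ‖B.1‖ ≤ max √(c / δB) √(c / δM) ∧ ‖B.2‖ ≤ max √(c / δB) √(c / δM) ∧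
      ∀ i, |((M i).1 : ℝ)| ≤ max √(c / δB) √(c / δM) ∧
        |((M i).2 : ℝ)| ≤ max √(c / δB) √(c / δM) := by
  have hB := (mul_norm_sq_le_latticeObjective hδM.le B M).trans hc
  have hM i := (mul_coeff_sq_le_latticeObjective hδB.le hδM.le B M i).trans hc
  refine ⟨?_, ?_, fun i => ⟨?_, ?_⟩⟩
  · rw [← abs_norm]
    exact (abs_le_sqrt_div_of_mul_sq_add_le hδB (sq_nonneg _) hB).trans (le_max_left _ _)
  · rw [add_comm] at hB
    rw [← abs_norm]
    exact (abs_le_sqrt_div_of_mul_sq_add_le hδB (sq_nonneg _) hB).trans (le_max_left _ _)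
  · exact (abs_le_sqrt_div_of_mul_sq_add_le hδM (sq_nonneg _) (hM i)).trans (le_max_right _ _)
  · have hMi := hM i
    rw [add_comm] at hMi
    exact (abs_le_sqrt_div_of_mul_sq_add_le hδM (sq_nonneg _) hMi).trans (le_max_right _ _)

end Normed

section InnerProduct

variable [NormedAddCommGroup E] [InnerProductSpace ℝ E]

/- `E × E` carries the sup norm; `‖B.1‖² + ‖B.2‖²` is the squared norm of the Hilbert sum
`WithLp 2 (E × E)`. -/
theorem strongConvexOn_latticeObjective (M : ι → ℤ × ℤ) :
    StrongConvexOn Set.univ (2 * δB) fun x : WithLp 2 (E × E) =>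
      latticeObjective e δB δM x.ofLp M := by
  rw [strongConvexOn_iff_convex]
  have hconv : ConvexOn ℝ Set.univ fun x : WithLp 2 (E × E) =>
      ∑ i, ‖((M i).1 : ℝ) • x.fst + ((M i).2 : ℝ) • x.snd - e i‖ ^ 2 := by
    have := Finset.sum_induction (s := Finset.univ)
      (fun i (x : WithLp 2 (E × E)) => ‖((M i).1 : ℝ) • x.fst + ((M i).2 : ℝ) • x.snd - e i‖ ^ 2)
      (ConvexOn ℝ Set.univ) (fun _ _ => ConvexOn.add) (convexOn_const 0 convex_univ)
      fun i _ => convexOn_norm_sub_sq_comp_linearMap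
        ((((M i).1 : ℝ) • LinearMap.fst ℝ E E + ((M i).2 : ℝ) • LinearMap.snd ℝ E E) ∘ₗ
          (WithLp.linearEquiv 2 ℝ (E × E)).toLinearMap) (e i)
    simpa only [Finset.sum_fn] using this
  refine (hconv.add_const (δM * ∑ i, (((M i).1 : ℝ) ^ 2 + ((M i).2 : ℝ) ^ 2))).congr
    fun x _ => ?_
  simp only [latticeObjective, Pi.add_apply, WithLp.prod_norm_sq_eq_of_L2, WithLp.ofLp_fst,
    WithLp.ofLp_snd]
  ring

theorem subsingleton_latticeObjective_minimizers (hδB : 0 < δB) (M : ι → ℤ × ℤ) :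
    Set.Subsingleton
      {P : E × E | ∀ B', latticeObjective e δB δM P M ≤ latticeObjective e δB δM B' M} := by
  intro P hP R hR
  have hstrict := (strongConvexOn_latticeObjective (e := e) (δM := δM) M).strictConvexOn
    (by positivity : 0 < 2 * δB)
  refine WithLp.toLp_injective 2 (hstrict.eq_of_isMinOn ?_ ?_ trivial trivial)
  · exact isMinOn_univ_iff.2 fun x => hP x.ofLp
  · exact isMinOn_univ_iff.2 fun x => hR x.ofLp

end InnerProduct

end LatticeObjective

/-- Theorem 5.3 (finite-time convergence of the alternate minimization): the
objective sequence is non-increasing, the iterates are bounded, and both the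
integer coefficients and the basis iterates are eventually constant. -/
theorem stmt_17 {ι : Type*} [Fintype ι]
    (e : ι → EuclideanSpace ℝ (Fin 2)) (δB δM : ℝ) (hδB : 0 < δB) (hδM : 0 < δM)
    (Q : (EuclideanSpace ℝ (Fin 2) × EuclideanSpace ℝ (Fin 2)) → (ι → ℤ × ℤ) → ℝ)
    (hQ : ∀ B M, Q B M =
      (∑ i, ‖((M i).1 : ℝ) • B.1 + ((M i).2 : ℝ) • B.2 - e i‖ ^ 2)
        + δB * (‖B.1‖ ^ 2 + ‖B.2‖ ^ 2)
        + δM * ∑ i, (((M i).1 : ℝ) ^ 2 + ((M i).2 : ℝ) ^ 2))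
    (B : ℕ → EuclideanSpace ℝ (Fin 2) × EuclideanSpace ℝ (Fin 2))
    (M : ℕ → ι → ℤ × ℤ)
    (hM : ∀ n, Q (B n) (M (n + 1)) < Q (B n) (M n) ∨ M (n + 1) = M n)
    (hB : ∀ n B', Q (B (n + 1)) (M (n + 1)) ≤ Q B' (M (n + 1))) :
    (∀ n, Q (B (n + 1)) (M (n + 1)) ≤ Q (B n) (M n)) ∧
    (∃ C : ℝ, ∀ n, ‖(B n).1‖ ≤ C ∧ ‖(B n).2‖ ≤ C ∧
        ∀ i, |(((M n i).1 : ℝ))| ≤ C ∧ |(((M n i).2 : ℝ))| ≤ C) ∧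
    (∃ N, ∀ n, N ≤ n → M n = M N ∧ B n = B N) := by
  obtain rfl : Q = latticeObjective e δB δM := funext₂ hQ
  have h : IsAlternateMinimization (latticeObjective e δB δM) B M := ⟨hM, hB⟩
  have hbound n := bounded_of_latticeObjective_le hδB hδM (h.objective_antitone (Nat.zero_le n))
  refine ⟨h.objective_succ_le, ⟨_, hbound⟩, h.exists_forall_ge_eq ?_
    (subsingleton_latticeObjective_minimizers hδB)⟩
  exact (finite_setOf_forall_abs_intCast_le _).subset
    (Set.range_subset_iff.2 fun n => (hbound n).2.2)
end
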